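/- arXiv:1812.03024 — 6 statements merged into one kernel-verified Lean document; each statement's English description precedes it below -/
import Mathlib

section
/- Let m be a positive natural number and order ℕ^m componentwise. Then the set U(ℕ^m, ≤) of upward closed subsets of ℕ^m, partially ordered by set inclusion ⊆, has no antichain; that is, there is no sequence (F_i)_{i∈ℕ} of upward closed subsets of ℕ^m such that F_i ⊆ F_j implies i = j. -/
/-!
Taking complements turns an antichain of upward closed sets into a sequence of lower sets with
no `D i ⊆ D j` for `i < j`, so it suffices that the lower sets of `ℕ^m` are well-quasi-ordered
by inclusion. This goes by induction on `m`, via `ℕ × α`. The slices `{x | (n, x) ∈ D}` of a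
lower set `D` of `ℕ × α` form an antitone sequence of lower sets of `α`, constant from some
`N` on by the induction hypothesis. Hence `D` is encoded by the finite list of its first `N`
slices together with the limit slice; Higman's lemma for the lists and a monotone subsequence
of the limits give `D i ⊆ D j` for some `i < j` in any sequence.
-/

theorem List.SublistForall₂.exists_le_getElem {α β : Type*} {R : α → β → Prop}
    {l₁ : List α} {l₂ : List β} (h : SublistForall₂ R l₁ l₂) :
    ∀ {n} (hn : n < l₁.length),
      ∃ m, ∃ hm : m < l₂.length, n ≤ m ∧ R l₁[n] l₂[m] := by
  induction h with
  | nil => simp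
  | cons hab _ ih =>
    rintro (_ | n) hn
    · exact ⟨0, by simp, le_rfl, hab⟩
    · obtain ⟨m, hm, hnm, hR⟩ := ih (Nat.lt_of_succ_lt_succ hn)
      exact ⟨m + 1, by simpa using hm, by omega, hR⟩
  | cons_right _ ih =>
    intro n hn
    obtain ⟨m, hm, hnm, hR⟩ := ih hn
    exact ⟨m + 1, by simpa using hm, by omega, hR⟩

namespace LowerSet

variable {α : Type*} [Preorder α]

def slice (D : LowerSet (ℕ × α)) (n : ℕ) : LowerSet α :=
  ⟨{x | (n, x) ∈ D}, fun _ _ hyx hx => D.lower (Prod.mk_le_mk.2 ⟨le_rfl, hyx⟩) hx⟩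

lemma slice_antitone (D : LowerSet (ℕ × α)) : Antitone D.slice :=
  fun _ _ hnm _ hx => D.lower (Prod.mk_le_mk.2 ⟨hnm, le_rfl⟩) hx

lemma le_iff_forall_slice_le {D E : LowerSet (ℕ × α)} :
    D ≤ E ↔ ∀ n, D.slice n ≤ E.slice n :=
  ⟨fun h _ _ hx => h hx, fun h ⟨n, _⟩ hx => h n hx⟩

theorem wellQuasiOrderedLE_nat_prod [WellQuasiOrderedLE (LowerSet α)] :
    WellQuasiOrderedLE (LowerSet (ℕ × α)) := by
  refine ⟨fun f => ?_⟩
  choose N hN using fun k => WellFoundedLT.antitone_chain_condition (f k).slice_antitone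
  obtain ⟨g, hg⟩ := wellQuasiOrdered_le.exists_monotone_subseq fun k => (f k).slice (N k)
  have higman := (Set.isPWO_of_wellQuasiOrderedLE Set.univ).partiallyWellOrderedOn_sublistForall₂
    (α := LowerSet α) (· ≤ ·)
  obtain ⟨i, j, hij, hsub⟩ :=
    higman.exists_lt (f := fun k => (List.range (N (g k))).map (f (g k)).slice) (by simp)
  refine ⟨g i, g j, g.strictMono hij, le_iff_forall_slice_le.2 fun n => ?_⟩
  rcases lt_or_ge n (N (g i)) with hn | hn
  · obtain ⟨m, _, hnm, hle⟩ := hsub.exists_le_getElem (by simpa using hn)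
    simp only [List.getElem_map, List.getElem_range] at hle
    exact hle.trans ((f (g j)).slice_antitone hnm)
  · have hlim : (f (g j)).slice (N (g j)) ≤ (f (g j)).slice n := by
      rcases le_total n (N (g j)) with h | h
      · exact (f (g j)).slice_antitone h
      · exact (hN (g j) n h).le
    calc (f (g i)).slice n = (f (g i)).slice (N (g i)) := (hN (g i) n hn).symm
      _ ≤ (f (g j)).slice (N (g j)) := hg i j hij.le
      _ ≤ (f (g j)).slice n := hlim

instance wellQuasiOrderedLE_fin_arrow_nat (m : ℕ) :
    WellQuasiOrderedLE (LowerSet (Fin m → ℕ)) := by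
  induction m with
  | zero =>
    have : Finite (LowerSet (Fin 0 → ℕ)) := Finite.of_injective _ SetLike.coe_injective
    exact Finite.to_wellQuasiOrderedLE
  | succ m ih =>
    exact (LowerSet.map (Fin.consOrderIso fun _ => ℕ)).wellQuasiOrderedLE_iff.1
      wellQuasiOrderedLE_nat_prod

end LowerSet

theorem stmt_2_general (m : ℕ) :
    ¬ ∃ F : ℕ → Set (Fin m → ℕ),
      (∀ i : ℕ, ∀ u ∈ F i, ∀ a : Fin m → ℕ, u ≤ a → a ∈ F i) ∧
      (∀ i j : ℕ, F i ⊆ F j → i = j) := by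
  rintro ⟨F, hup, hanti⟩
  let D : ℕ → LowerSet (Fin m → ℕ) :=
    fun k => ⟨(F k)ᶜ, fun a b hba ha hb => ha (hup k b hb a hba)⟩
  obtain ⟨i, j, hij, hle⟩ := wellQuasiOrdered_le D
  exact hij.ne' (hanti j i fun x hx => not_not.1 fun hxi => hle hxi hx)

/-- Theorem 1(2), second part: the upward closed subsets of `(ℕ^m, ≤)`, ordered by
inclusion, have no antichain. -/
theorem stmt_2 (m : ℕ) (hm : 0 < m) :
    ¬ ∃ F : ℕ → Set (Fin m → ℕ),
      (∀ i : ℕ, ∀ u ∈ F i, ∀ a : Fin m → ℕ, u ≤ a → a ∈ F i) ∧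
      (∀ i j : ℕ, F i ⊆ F j → i = j) :=
  stmt_2_general m
end

section
/- Let A be a finite set and let A* denote the set of finite words over A, ordered by the embedding order ≤_e: u ≤_e v iff u can be obtained from v by cancelling some letters (i.e., u is a sublist/subsequence of v). Then (A*, ≤_e) has no descending chain and no antichain. -/
/-!
A strict sublist is strictly shorter, so a strictly descending chain of words would give a strictly
descending sequence of natural numbers. An antichain cannot exist because, by Higman's lemma, the
embedding order on words over a well-quasi-ordered alphabet is a well-quasi-order, and a finite
alphabet ordered by equality is well-quasi-ordered.
-/

namespace List

variable {α : Type*}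

theorem Sublist.length_lt_of_ne {l₁ l₂ : List α} (h : l₁ <+ l₂) (hne : l₁ ≠ l₂) :
    l₁.length < l₂.length :=
  h.length_le.lt_of_ne fun hlen ↦ hne (h.eq_of_length hlen)

theorem wellFounded_strictSublist :
    WellFounded fun l₁ l₂ : List α ↦ l₁ <+ l₂ ∧ l₁ ≠ l₂ :=
  Subrelation.wf (fun h ↦ h.1.length_lt_of_ne h.2) (measure length).wf

theorem sublistForall₂_eq_eq_sublist : SublistForall₂ (α := α) (· = ·) = Sublist := by
  ext l₁ l₂
  simp [sublistForall₂_iff, forall₂_eq_eq_eq]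

theorem wellQuasiOrdered_sublist [Finite α] : WellQuasiOrdered (@Sublist α) := by
  have higman := (Set.finite_univ (α := α)).partiallyWellOrderedOn
    |>.partiallyWellOrderedOn_sublistForall₂ (· = ·)
  simpa only [Set.mem_univ, implies_true, Set.ofPred_true, Set.partiallyWellOrderedOn_univ_iff,
    sublistForall₂_eq_eq_sublist] using higman

end List

/-- Theorem 2(1) (Higman): for a finite alphabet `A`, the set of words `A*` ordered by the
embedding (subsequence) order `≤ₑ` has no descending chain and no antichain. -/
theorem stmt_3 (A : Type*) [Fintype A] :
    (¬ ∃ a : ℕ → List A, ∀ i : ℕ, (a (i + 1)).Sublist (a i) ∧ a (i + 1) ≠ a i) ∧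
    (¬ ∃ a : ℕ → List A, ∀ i j : ℕ, (a i).Sublist (a j) → i = j) := by
  constructor
  · rintro ⟨a, descending⟩
    exact (wellFounded_iff_isEmpty_descending_chain.1 List.wellFounded_strictSublist).false
      ⟨a, descending⟩
  · rintro ⟨a, antichain⟩
    obtain ⟨i, j, hij, hsub⟩ := List.wellQuasiOrdered_sublist a
    exact hij.ne (antichain i j hsub)
end

section
/- Let A be a finite set and order A* by the embedding order ≤_e (u ≤_e v iff u is a subsequence of v). Then the set U(A*, ≤_e) of upward closed subsets of A*, partially ordered by set inclusion ⊆, has no ascending chain; that is, there is no sequence (C_i)_{i∈ℕ} of upward closed subsets of A* with C_i ⊊ C_{i+1} for all i ∈ ℕ. -/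
/-! By Higman's lemma the subsequence order on words over a finite alphabet is a well
quasi-order. In a strictly ascending chain of upward closed sets pick `w i ∈ C (i + 1) \ C i`;
Higman gives `i < j` with `w i` a subsequence of `w j`, and then `w i ∈ C (i + 1) ⊆ C j`
forces `w j ∈ C j` by upward closure, a contradiction. -/

theorem List.sublistForall₂_eq_iff_sublist {α : Type*} {l₁ l₂ : List α} :
    SublistForall₂ (· = ·) l₁ l₂ ↔ l₁.Sublist l₂ := by
  rw [sublistForall₂_iff, forall₂_eq_eq_eq]
  exact ⟨fun ⟨_, rfl, h⟩ ↦ h, fun h ↦ ⟨l₁, rfl, h⟩⟩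

theorem List.wellQuasiOrdered_sublist_s4 (α : Type*) [Finite α] :
    WellQuasiOrdered (@List.Sublist α) := by
  have higman := (Set.partiallyWellOrderedOn_of_wellQuasiOrdered
    (Finite.wellQuasiOrdered (α := α) (· = ·)) Set.univ).partiallyWellOrderedOn_sublistForall₂
  rw [show {l : List α | ∀ x ∈ l, x ∈ Set.univ} = Set.univ by simp,
    Set.partiallyWellOrderedOn_univ_iff] at higman
  have hrel : SublistForall₂ (α := α) (· = ·) = Sublist :=
    funext₂ fun _ _ ↦ propext sublistForall₂_eq_iff_sublist
  rwa [hrel] at higman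

theorem WellQuasiOrdered.not_strictMono_of_forall_closed {α : Type*} {r : α → α → Prop}
    (hr : WellQuasiOrdered r) (C : ℕ → Set α) (hC : ∀ i, ∀ u ∈ C i, ∀ v, r u v → v ∈ C i) :
    ¬ StrictMono C := by
  intro hmono
  have hnew : ∀ i, ∃ w, w ∈ C (i + 1) ∧ w ∉ C i := fun i ↦
    Set.not_subset.1 (hmono (Nat.lt_succ_self i)).2
  choose w hw_mem hw_not_mem using hnew
  obtain ⟨i, j, hij, hr_ij⟩ := hr w
  exact hw_not_mem j (hC j (w i) (hmono.monotone hij (hw_mem i)) (w j) hr_ij)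

/-- Theorem 2(2), first part: the upward closed subsets of `(A*, ≤ₑ)` (embedding order,
i.e. the sublist order), ordered by inclusion, have no ascending chain. -/
theorem stmt_4 (A : Type*) [Fintype A] :
    ¬ ∃ C : ℕ → Set (List A),
      (∀ i : ℕ, ∀ u ∈ C i, ∀ v : List A, u.Sublist v → v ∈ C i) ∧
      (∀ i : ℕ, C i ⊂ C (i + 1)) := by
  rintro ⟨C, hup, hchain⟩
  exact (List.wellQuasiOrdered_sublist_s4 A).not_strictMono_of_forall_closed C hup
    (strictMono_nat_of_lt_succ hchain)
end

section
/- Let (A, ≤) be a partially ordered set that has no descending chain and has an infinite antichain (a sequence (a_i)_{i∈ℕ} with a_i ≤ a_j implying i = j). Then (A, ≤) has a minimal bad sequence: a bad sequence (a_i)_{i∈ℕ} such that for every i ∈ ℕ and every b < a_i, every sequence starting with (a_0, a_1, …, a_{i−1}, b) is good. -/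
/-!
In a well-founded preorder with a bad sequence, build the minimal bad sequence greedily: at
stage `n`, among all bad sequences agreeing with the current one below `n`, pick one whose
`n`-th term is `<`-minimal. Later stages never change earlier terms, so the diagonal sequence
agrees below `n + 1` with a bad sequence for every `n` (hence is bad), and any bad sequence
undercutting it at position `i` would contradict the choice made at stage `i`.
-/

section

variable {A : Type*} [Preorder A]

def IsGoodSeq (c : ℕ → A) : Prop :=
  ∃ i j : ℕ, i < j ∧ c i ≤ c j

def IsMinimalBadSeq (a : ℕ → A) : Prop :=
  ¬ IsGoodSeq a ∧
    ∀ i : ℕ, ∀ b : A, b < a i →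
      ∀ c : ℕ → A, (∀ k : ℕ, k < i → c k = a k) → c i = b → IsGoodSeq c

theorem exists_bad_extension_min_at [WellFoundedLT A] {c : ℕ → A} (hc : ¬ IsGoodSeq c)
    (n : ℕ) :
    ∃ d : ℕ → A, ¬ IsGoodSeq d ∧ (∀ k < n, d k = c k) ∧
      ∀ e : ℕ → A, (∀ k < n, e k = c k) → e n < d n → IsGoodSeq e := by
  obtain ⟨_, ⟨d, hd, hdc, rfl⟩, hmin⟩ := wellFounded_lt.has_min
    {x | ∃ d : ℕ → A, ¬ IsGoodSeq d ∧ (∀ k < n, d k = c k) ∧ d n = x}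
    ⟨c n, c, hc, fun _ _ ↦ rfl, rfl⟩
  exact ⟨d, hd, hdc, fun e he hlt ↦ by_contra fun hbad ↦ hmin (e n) ⟨e, hbad, he, rfl⟩ hlt⟩

variable (A) in
def BadSeq : Type _ := {c : ℕ → A // ¬ IsGoodSeq c}

namespace BadSeq

variable [WellFoundedLT A]

noncomputable def minimizeAt (c : BadSeq A) (n : ℕ) : BadSeq A :=
  ⟨_, (exists_bad_extension_min_at c.2 n).choose_spec.1⟩

theorem minimizeAt_apply_of_lt (c : BadSeq A) {n k : ℕ} (hk : k < n) :
    (c.minimizeAt n).1 k = c.1 k :=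
  (exists_bad_extension_min_at c.2 n).choose_spec.2.1 k hk

theorem isGoodSeq_of_lt_minimizeAt (c : BadSeq A) (n : ℕ) {e : ℕ → A}
    (he : ∀ k < n, e k = c.1 k) (hlt : e n < (c.minimizeAt n).1 n) : IsGoodSeq e :=
  (exists_bad_extension_min_at c.2 n).choose_spec.2.2 e he hlt

noncomputable def minimizeUpTo (c : BadSeq A) : ℕ → BadSeq A
  | 0 => c
  | n + 1 => (c.minimizeUpTo n).minimizeAt n

theorem minimizeUpTo_apply_of_le (c : BadSeq A) {k m m' : ℕ} (hk : k < m) (hm : m ≤ m') :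
    (c.minimizeUpTo m').1 k = (c.minimizeUpTo m).1 k := by
  induction m', hm using Nat.le_induction with
  | base => rfl
  | succ m' hm ih => exact (minimizeAt_apply_of_lt _ (hk.trans_le hm)).trans ih

noncomputable def diag (c : BadSeq A) (k : ℕ) : A :=
  (c.minimizeUpTo (k + 1)).1 k

theorem minimizeUpTo_apply (c : BadSeq A) {k m : ℕ} (hk : k < m) :
    (c.minimizeUpTo m).1 k = c.diag k :=
  minimizeUpTo_apply_of_le c (Nat.lt_succ_self k) hk

theorem isMinimalBadSeq_diag (c : BadSeq A) : IsMinimalBadSeq c.diag := by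
  constructor
  · rintro ⟨i, j, hij, hle⟩
    refine (c.minimizeUpTo (j + 1)).2 ⟨i, j, hij, ?_⟩
    rwa [minimizeUpTo_apply c (hij.trans j.lt_succ_self), minimizeUpTo_apply c j.lt_succ_self]
  · rintro i _ hb e he rfl
    refine isGoodSeq_of_lt_minimizeAt (c.minimizeUpTo i) i (fun k hk ↦ ?_) hb
    rw [he k hk, minimizeUpTo_apply c hk]

end BadSeq

theorem exists_isMinimalBadSeq [WellFoundedLT A] (h : ∃ c : ℕ → A, ¬ IsGoodSeq c) :
    ∃ a : ℕ → A, IsMinimalBadSeq a :=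
  let ⟨c, hc⟩ := h
  ⟨_, BadSeq.isMinimalBadSeq_diag ⟨c, hc⟩⟩

end

/-- Lemma 3.3 (Nash-Williams): if `(A, ≤)` has no descending chain and has an infinite
antichain, then it has a minimal bad sequence. -/
theorem stmt_10 (A : Type*) [PartialOrder A]
    (hdesc : ¬ ∃ a : ℕ → A, ∀ i : ℕ, a (i + 1) < a i)
    (hanti : ∃ a : ℕ → A, ∀ i j : ℕ, a i ≤ a j → i = j) :
    ∃ a : ℕ → A,
      (¬ ∃ i j : ℕ, i < j ∧ a i ≤ a j) ∧
      (∀ i : ℕ, ∀ b : A, b < a i →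
        ∀ c : ℕ → A, (∀ k : ℕ, k < i → c k = a k) → c i = b →
          ∃ p q : ℕ, p < q ∧ c p ≤ c q) := by
  have : WellFoundedLT A :=
    ⟨wellFounded_iff_isEmpty_descending_chain.2 ⟨fun ⟨f, hf⟩ ↦ hdesc ⟨f, hf⟩⟩⟩
  obtain ⟨e, he⟩ := hanti
  have hbad : ¬ IsGoodSeq e := fun ⟨i, j, hij, hle⟩ ↦ hij.ne (he i j hle)
  exact exists_isMinimalBadSeq ⟨e, hbad⟩
end

section
/- Let A be a finite alphabet and let X, Y be upward closed subsets of (A*, ≤_e). Suppose X ≠ A* and for all b ∈ Som(X) we have b⁻¹X ⊆ b⁻¹Y. Then X ⊆ Y. -/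
/-- Lemma 5.1(3): let `X`, `Y` be upward closed subsets of `(A*, ≤ₑ)` with `X ≠ A*`.
If `b⁻¹X ⊆ b⁻¹Y` for every `b ∈ Som(X)` (the starting letters of minimal elements
of `X`), then `X ⊆ Y`. -/
theorem stmt_14 (A : Type*) [Fintype A] (X Y : Set (List A))
    (hX : ∀ x ∈ X, ∀ y : List A, x.Sublist y → y ∈ X)
    (hY : ∀ x ∈ Y, ∀ y : List A, x.Sublist y → y ∈ Y)
    (hne : X ≠ Set.univ)
    (h : ∀ b : A, (∃ u : List A, b :: u ∈ X ∧ ∀ v ∈ X, v.Sublist (b :: u) → v = b :: u) →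
      {y : List A | b :: y ∈ X} ⊆ {y : List A | b :: y ∈ Y}) :
    X ⊆ Y := by
  intro x hx
  -- find a minimal-length sublist of x belonging to X
  have hS : x ∈ {l : List A | l.Sublist x ∧ l ∈ X} := ⟨List.Sublist.refl x, hx⟩
  obtain ⟨m, ⟨hmsub, hmX⟩, hmin⟩ :=
    (measure List.length).wf.has_min {l : List A | l.Sublist x ∧ l ∈ X} ⟨x, hS⟩
  have hminimal : ∀ v ∈ X, v.Sublist m → v = m := by
    intro v hvX hvm
    have hvS : v ∈ {l : List A | l.Sublist x ∧ l ∈ X} := ⟨hvm.trans hmsub, hvX⟩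
    have hlen : ¬ v.length < m.length := hmin v hvS
    exact hvm.eq_of_length (le_antisymm hvm.length_le (not_lt.mp hlen))
  -- m is nonempty since [] ∉ X
  cases m with
  | nil =>
      exact absurd (Set.eq_univ_iff_forall.mpr fun y => hX [] hmX y (List.nil_sublist y)) hne
  | cons c w =>
      have hmY : c :: w ∈ Y := h c ⟨w, hmX, hminimal⟩ hmX
      exact hY _ hmY x hmsub
end

section
/- Let (A, ≤_A) and (B, ≤_B) be partially ordered sets and let f : A → B be a quasi-embedding. Suppose (B, ≤_B) has no descending chain and no antichain, and (U(B, ≤_B), ⊆) has no antichain. Then (A, ≤_A) has no descending chain and no antichain, and (U(A, ≤_A), ⊆) has no ascending chain and no antichain. -/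
/-- Corollary 6.4: let `f : A → B` be a quasi-embedding. If `B` has no descending chain
and no antichain, and the upward closed subsets of `B` (ordered by inclusion) have no
antichain, then `A` has no descending chain and no antichain, and the upward closed
subsets of `A` (ordered by inclusion) have no ascending chain and no antichain. -/
theorem stmt_18 (A B : Type*) [PartialOrder A] [PartialOrder B] (f : A → B)
    (hf : ∀ a₁ a₂ : A, f a₁ ≤ f a₂ → a₁ ≤ a₂)
    (hBdesc : ¬ ∃ b : ℕ → B, ∀ i : ℕ, b (i + 1) < b i)
    (hBanti : ¬ ∃ b : ℕ → B, ∀ i j : ℕ, b i ≤ b j → i = j)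
    (hUBanti : ¬ ∃ D : ℕ → Set B,
      (∀ i : ℕ, ∀ u ∈ D i, ∀ b : B, u ≤ b → b ∈ D i) ∧
      (∀ i j : ℕ, D i ⊆ D j → i = j)) :
    (¬ ∃ a : ℕ → A, ∀ i : ℕ, a (i + 1) < a i) ∧
    (¬ ∃ a : ℕ → A, ∀ i j : ℕ, a i ≤ a j → i = j) ∧
    (¬ ∃ C : ℕ → Set A,
      (∀ i : ℕ, ∀ u ∈ C i, ∀ a : A, u ≤ a → a ∈ C i) ∧
      (∀ i : ℕ, C i ⊂ C (i + 1))) ∧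
    (¬ ∃ C : ℕ → Set A,
      (∀ i : ℕ, ∀ u ∈ C i, ∀ a : A, u ≤ a → a ∈ C i) ∧
      (∀ i j : ℕ, C i ⊆ C j → i = j)) := by
  -- B is a wqo
  have bwqo : ∀ b : ℕ → B, ∃ i j : ℕ, i < j ∧ b i ≤ b j := by
    intro b
    by_contra h
    push_neg at h
    haveI : IsTrans B (· ≤ ·) := ⟨fun _ _ _ => le_trans⟩
    haveI : IsTrans B (fun x y : B => y < x) := ⟨fun _ _ _ h1 h2 => lt_trans h2 h1⟩
    obtain ⟨g, hg | hg⟩ := exists_increasing_or_nonincreasing_subseq (· ≤ ·) b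
    · exact h (g 0) (g 1) (g.strictMono Nat.zero_lt_one) (hg 0 1 Nat.zero_lt_one)
    · set c : ℕ → B := fun n => b (g n) with hc
      obtain ⟨g', hg' | hg'⟩ :=
        exists_increasing_or_nonincreasing_subseq (fun x y : B => y < x) c
      · exact hBdesc ⟨fun n => c (g' n), fun i => hg' i (i + 1) (Nat.lt_succ_self i)⟩
      · refine hBanti ⟨fun n => c (g' n), fun i j hij => ?_⟩
        rcases lt_trichotomy i j with hlt | heq | hlt
        · exact absurd hij (hg (g' i) (g' j) (g'.strictMono hlt))
        · exact heq
        · rcases eq_or_lt_of_le hij with heq | hlt2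
          · exact absurd heq.ge (hg (g' j) (g' i) (g'.strictMono hlt))
          · exact absurd hlt2 (hg' j i hlt)
  -- hence A is a wqo
  have awqo : ∀ a : ℕ → A, ∃ i j : ℕ, i < j ∧ a i ≤ a j := by
    intro a
    obtain ⟨i, j, hij, hle⟩ := bwqo (fun n => f (a n))
    exact ⟨i, j, hij, hf _ _ hle⟩
  refine ⟨?_, ?_, ?_, ?_⟩
  · rintro ⟨a, ha⟩
    have hanti : StrictAnti a := strictAnti_nat_of_succ_lt ha
    obtain ⟨i, j, hij, hle⟩ := awqo a
    exact lt_irrefl _ (hle.trans_lt (hanti hij))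
  · rintro ⟨a, ha⟩
    obtain ⟨i, j, hij, hle⟩ := awqo a
    exact hij.ne (ha i j hle)
  · rintro ⟨C, hCup, hCasc⟩
    have hmono : ∀ i j : ℕ, i ≤ j → C i ⊆ C j := fun i j h =>
      monotone_nat_of_le_succ (fun n => (hCasc n).subset) h
    have hex : ∀ i : ℕ, ∃ x, x ∈ C (i + 1) ∧ x ∉ C i := fun i =>
      Set.exists_of_ssubset (hCasc i)
    choose a ha₁ ha₂ using hex
    obtain ⟨i, j, hij, hle⟩ := awqo a
    exact ha₂ j (hCup j (a i) (hmono (i + 1) j hij (ha₁ i)) (a j) hle)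
  · rintro ⟨C, hCup, hCanti⟩
    refine hUBanti ⟨fun i => {b | ∃ x ∈ C i, f x ≤ b}, ?_, ?_⟩
    · rintro i u ⟨x, hx, hxu⟩ b hub
      exact ⟨x, hx, hxu.trans hub⟩
    · intro i j hsub
      refine hCanti i j fun x hx => ?_
      obtain ⟨y, hy, hyx⟩ := hsub ⟨x, hx, le_rfl⟩
      exact hCup j y hy x (hf _ _ hyx)
end
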